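/- Assume (A2) with the second symmetry, i.e. conj(A_ε(−conj(x))) = −A_ε(x). Let u^±(x,h,ε;γ,x₀) be the exact WKB solutions of L_ε u = λu and v^±(x,h,ε;γ,x₀) the exact WKB solutions of L_ε v = conj(λ)v. Then u^±(x,h,ε;γ,x₀) = ±[[0,−1],[1,0]] · conj(v^∓(−conj(x), h, ε; −conj(γ), −conj(x₀))). -/

import Mathlib

/-!
STATEMENT 16 (Lemma 4.3, second symmetry).

Assume `conj(A_ε(-conj x)) = -A_ε(x)`. Let `u^±` be the exact WKB solutions of
`L_ε u = λu` and `v^±` those of `L_ε v = conj(λ) v`, with compatible branches: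
`conj(z_v(-conj x)) = -z(x)` and `conj(H_v(-conj x)) = H(x)⁻¹`, and with series base
points `x₀` and `-conj x₀`. Then
`u^±(x,h,ε;γ,x₀) = ±[[0,-1],[1,0]] conj(v^∓(-conj x,h,ε;-conj γ,-conj x₀))`.
-/

open Complex Set

noncomputable section

/-- `(we, wo)` is the pair of summed exact WKB series with sign `s = ±1` and base
point `x₀`. -/
def IsWKBSum (Ω : Set ℂ) (h : ℝ) (s : ℂ) (sq H : ℂ → ℂ) (x₀ : ℂ) (we wo : ℂ → ℂ) : Prop :=
  we x₀ = 1 ∧ wo x₀ = 0 ∧ ∀ x ∈ Ω,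
    HasDerivAt we (deriv H x / H x * wo x) x ∧
    HasDerivAt wo (deriv H x / H x * we x - s * (2 * sq x / (h : ℂ)) * wo x) x

/-- The exact WKB solution `u⁺`, componentwise. -/
def wkbPlus (h : ℝ) (Z H we wo : ℂ → ℂ) (x : ℂ) : ℂ × ℂ :=
  (Complex.exp (Z x / (h : ℂ)) *
      ((H x)⁻¹ * (wo x + we x) + Complex.I * H x * (wo x - we x)),
   Complex.exp (Z x / (h : ℂ)) *
      (-Complex.I * (H x)⁻¹ * (wo x + we x) - H x * (wo x - we x)))

/-- The exact WKB solution `u⁻`, componentwise. -/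
def wkbMinus (h : ℝ) (Z H we wo : ℂ → ℂ) (x : ℂ) : ℂ × ℂ :=
  (Complex.exp (-Z x / (h : ℂ)) *
      ((H x)⁻¹ * (we x + wo x) + Complex.I * H x * (we x - wo x)),
   Complex.exp (-Z x / (h : ℂ)) *
      (-Complex.I * (H x)⁻¹ * (we x + wo x) - H x * (we x - wo x)))

/-!
Reflecting WKB sums for `conj λ` with base point `-conj x₀` by `f ↦ conj ∘ f ∘ (-conj)`, and
flipping the sign of the odd part, gives WKB sums for `λ` with base point `x₀` and the opposite
sign: the branch relations turn `sqv` into `sq` and the logarithmic derivative of `Hv` into that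
of `H`. WKB sums are unique: for sums of opposite signs `we ve - wo vo` is constant, for sums of
the same sign so is their Wronskian times `exp (2 s Z / h)`, and the base-point values pin both
down. Substituting into the explicit formulas for `u^±` is then algebra.
-/

open ComplexConjugate

theorem logDeriv_fun_inv {𝕜 𝕜' : Type*} [NontriviallyNormedField 𝕜] [NontriviallyNormedField 𝕜']
    [NormedAlgebra 𝕜 𝕜'] {f : 𝕜 → 𝕜'} {x : 𝕜} (hfx : f x ≠ 0) :
    logDeriv (fun y => (f y)⁻¹) x = -logDeriv f x := by
  by_cases hf : DifferentiableAt 𝕜 f x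
  · simpa using logDeriv_fun_zpow hf (-1)
  · have hf' : ¬DifferentiableAt 𝕜 (fun y => (f y)⁻¹) x := fun hinv =>
      hf <| (hinv.inv (inv_ne_zero hfx)).congr_of_eventuallyEq
        (.of_forall fun y => (inv_inv (f y)).symm)
    simp [logDeriv_eq_zero_of_not_differentiableAt _ _ hf,
      logDeriv_eq_zero_of_not_differentiableAt _ _ hf']

def imReflect (f : ℂ → ℂ) : ℂ → ℂ :=
  conj ∘ (fun y => f (-y)) ∘ conj

theorem imReflect_apply (f : ℂ → ℂ) (x : ℂ) : imReflect f x = conj (f (-conj x)) := rfl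

theorem HasDerivAt.imReflect {f : ℂ → ℂ} {f' x : ℂ} (hf : HasDerivAt f f' (-conj x)) :
    HasDerivAt (imReflect f) (-conj f') x := by
  have hneg : HasDerivAt (fun y => f (-y)) (-f') (conj x) := by
    simpa [Function.comp_def] using hf.comp (conj x) (hasDerivAt_neg (conj x))
  have hrefl := hneg.conj_conj
  rw [Complex.conj_conj, map_neg] at hrefl
  exact hrefl

theorem deriv_imReflect (f : ℂ → ℂ) (x : ℂ) :
    deriv (imReflect f) x = -conj (deriv f (-conj x)) := by
  simp [imReflect, deriv_conj_conj, deriv_comp_neg]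

theorem logDeriv_imReflect (f : ℂ → ℂ) (x : ℂ) :
    logDeriv (imReflect f) x = -conj (logDeriv f (-conj x)) := by
  simp only [logDeriv_apply, deriv_imReflect, imReflect_apply, map_div₀, neg_div]

theorem logDeriv_eq_conj_logDeriv_of_imReflect_eq_inv {Ω : Set ℂ} (hΩ : IsOpen Ω)
    {H Hv : ℂ → ℂ} (hrel : ∀ y ∈ Ω, imReflect Hv y = (H y)⁻¹) {x : ℂ} (hx : x ∈ Ω)
    (hHx : H x ≠ 0) : logDeriv H x = conj (logDeriv Hv (-conj x)) := by
  have hH : H =ᶠ[nhds x] fun y => (imReflect Hv y)⁻¹ := by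
    filter_upwards [hΩ.mem_nhds hx] with y hy
    rw [hrel y hy, inv_inv]
  rw [(logDeriv_congr_nhds hH).eq_of_nhds, logDeriv_fun_inv (by simpa [hrel x hx] using hHx),
    logDeriv_imReflect, neg_neg]

theorem IsOpen.eq_of_hasDerivAt_eq_zero {Ω : Set ℂ} (hΩ : IsOpen Ω) (hΩc : IsPreconnected Ω)
    {f : ℂ → ℂ} (hf : ∀ x ∈ Ω, HasDerivAt f 0 x) {x y : ℂ} (hx : x ∈ Ω) (hy : y ∈ Ω) :
    f x = f y :=
  hΩ.is_const_of_deriv_eq_zero hΩc (fun z hz => (hf z hz).differentiableAt.differentiableWithinAt)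
    (fun z hz => (hf z hz).deriv) hx hy

namespace IsWKBSum

variable {Ω : Set ℂ} {h : ℝ} {s : ℂ} {sq H : ℂ → ℂ} {x₀ : ℂ} {we wo : ℂ → ℂ}

theorem imReflect {sqv Hv : ℂ → ℂ} (hΩ : ∀ x ∈ Ω, -conj x ∈ Ω)
    (hsq : ∀ x ∈ Ω, imReflect sqv x = sq x)
    (hH : ∀ x ∈ Ω, logDeriv H x = conj (logDeriv Hv (-conj x)))
    (hw : IsWKBSum Ω h s sqv Hv (-conj x₀) we wo) :
    IsWKBSum Ω h (-conj s) sq H x₀ (imReflect we) (-imReflect wo) := by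
  obtain ⟨he₀, ho₀, hw⟩ := hw
  refine ⟨by simp [imReflect_apply, he₀], by simp [imReflect_apply, ho₀], fun x hx => ?_⟩
  obtain ⟨hde, hdo⟩ := hw _ (hΩ x hx)
  simp only [← logDeriv_apply] at hde hdo ⊢
  constructor
  · refine hde.imReflect.congr_deriv ?_
    simp only [hH x hx, map_mul, imReflect_apply, Pi.neg_apply]
    ring
  · refine hdo.imReflect.neg.congr_deriv ?_
    simp only [hH x hx, ← hsq x hx, map_sub, map_mul, map_div₀, map_ofNat, conj_ofReal,
      imReflect_apply, Pi.neg_apply]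
    ring

theorem cross_eq_one (hΩ : IsOpen Ω) (hΩc : IsPreconnected Ω) (hx₀ : x₀ ∈ Ω)
    {ve vo : ℂ → ℂ} (hw : IsWKBSum Ω h s sq H x₀ we wo) (hv : IsWKBSum Ω h (-s) sq H x₀ ve vo)
    {x : ℂ} (hx : x ∈ Ω) : we x * ve x - wo x * vo x = 1 := by
  obtain ⟨hwe₀, hwo₀, hw⟩ := hw
  obtain ⟨hve₀, hvo₀, hv⟩ := hv
  have hconst : ∀ y ∈ Ω, HasDerivAt (fun y => we y * ve y - wo y * vo y) 0 y := fun y hy =>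
    (((hw y hy).1.mul (hv y hy).1).sub ((hw y hy).2.mul (hv y hy).2)).congr_deriv (by ring)
  rw [hΩ.eq_of_hasDerivAt_eq_zero hΩc hconst hx hx₀, hwe₀, hwo₀, hve₀, hvo₀]
  ring

theorem wronskian_eq_zero (hΩ : IsOpen Ω) (hΩc : IsPreconnected Ω) (hx₀ : x₀ ∈ Ω)
    {Z : ℂ → ℂ} (hZ : ∀ x ∈ Ω, HasDerivAt Z (sq x) x) {ge go : ℂ → ℂ}
    (hw : IsWKBSum Ω h s sq H x₀ we wo) (hg : IsWKBSum Ω h s sq H x₀ ge go)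
    {x : ℂ} (hx : x ∈ Ω) : we x * go x - wo x * ge x = 0 := by
  obtain ⟨hwe₀, hwo₀, hw⟩ := hw
  obtain ⟨hge₀, hgo₀, hg⟩ := hg
  set E := fun y => Complex.exp (s * (2 * Z y) / (h : ℂ))
  have hconst : ∀ y ∈ Ω, HasDerivAt (fun y => (we y * go y - wo y * ge y) * E y) 0 y := by
    intro y hy
    have hE : HasDerivAt E (E y * (s * (2 * sq y) / (h : ℂ))) y :=
      ((((hZ y hy).const_mul 2).const_mul s).div_const (h : ℂ)).cexp
    exact ((((hw y hy).1.mul (hg y hy).2).sub ((hw y hy).2.mul (hg y hy).1)).mul hE).congr_deriv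
      (by simp only [Pi.sub_apply, Pi.mul_apply]; ring)
  have h₀ := hΩ.eq_of_hasDerivAt_eq_zero hΩc hconst hx hx₀
  simp only [hwe₀, hwo₀, hge₀, hgo₀, mul_zero, zero_mul, sub_zero] at h₀
  exact (mul_eq_zero.1 h₀).resolve_right (Complex.exp_ne_zero _)

theorem unique (hΩ : IsOpen Ω) (hΩc : IsPreconnected Ω) (hx₀ : x₀ ∈ Ω)
    {Z : ℂ → ℂ} (hZ : ∀ x ∈ Ω, HasDerivAt Z (sq x) x) {ge go ve vo : ℂ → ℂ}
    (hw : IsWKBSum Ω h s sq H x₀ we wo) (hg : IsWKBSum Ω h s sq H x₀ ge go)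
    (hv : IsWKBSum Ω h (-s) sq H x₀ ve vo) {x : ℂ} (hx : x ∈ Ω) :
    ge x = we x ∧ go x = wo x := by
  have hwv := hw.cross_eq_one hΩ hΩc hx₀ hv hx
  have hgv := hg.cross_eq_one hΩ hΩc hx₀ hv hx
  have hwg := hw.wronskian_eq_zero hΩ hΩc hx₀ hZ hg hx
  constructor
  · linear_combination (-ge x) * hwv + we x * hgv + vo x * hwg
  · linear_combination (-go x) * hwv + wo x * hgv + ve x * hwg

end IsWKBSum

theorem wkbPlus_eq_rotate_conj_wkbMinus {h : ℝ} {Z H we wo Zv Hv ve vo : ℂ → ℂ} {x y : ℂ}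
    (hZ : conj (Zv y) = -Z x) (hH : conj (Hv y) = (H x)⁻¹) (he : conj (ve y) = we x)
    (ho : conj (vo y) = -wo x) :
    (wkbPlus h Z H we wo x).1 = -conj (wkbMinus h Zv Hv ve vo y).2 ∧
      (wkbPlus h Z H we wo x).2 = conj (wkbMinus h Zv Hv ve vo y).1 := by
  constructor <;>
  · simp only [wkbPlus, wkbMinus, map_mul, map_add, map_sub, map_neg, map_inv₀, map_div₀,
      conj_I, conj_ofReal, ← Complex.exp_conj, hZ, hH, he, ho, inv_inv, neg_neg]
    ring

theorem wkbMinus_eq_neg_rotate_conj_wkbPlus {h : ℝ} {Z H we wo Zv Hv ve vo : ℂ → ℂ} {x y : ℂ}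
    (hZ : conj (Zv y) = -Z x) (hH : conj (Hv y) = (H x)⁻¹) (he : conj (ve y) = we x)
    (ho : conj (vo y) = -wo x) :
    (wkbMinus h Z H we wo x).1 = conj (wkbPlus h Zv Hv ve vo y).2 ∧
      (wkbMinus h Z H we wo x).2 = -conj (wkbPlus h Zv Hv ve vo y).1 := by
  constructor <;>
  · simp only [wkbPlus, wkbMinus, map_mul, map_add, map_sub, map_neg, map_inv₀, map_div₀,
      conj_I, conj_ofReal, ← Complex.exp_conj, hZ, hH, he, ho, inv_inv, neg_neg]
    ring

theorem wkb_symmetry_second_general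
    (F : ℂ → ℂ)  -- the perturbed potential `A_ε`
    (lam : ℂ) (h : ℝ)
    (Ω : Set ℂ) (hΩopen : IsOpen Ω) (hΩconn : IsPreconnected Ω)
    (hΩsym : ∀ x ∈ Ω, -(starRingEnd ℂ) x ∈ Ω)
    -- branches and phases for the spectral parameter `λ`
    (sq H Z : ℂ → ℂ)
    (hH : ∀ x ∈ Ω, H x ≠ 0 ∧ (H x) ^ 4 = (F x + lam) / (F x - lam))
    (hZ : ∀ x ∈ Ω, HasDerivAt Z (sq x) x)
    -- branches and phases for the spectral parameter `conj λ`
    (sqv Hv Zv : ℂ → ℂ)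
    -- compatibility of the branches under the symmetry
    (hsqrel : ∀ x ∈ Ω, (starRingEnd ℂ) (sqv (-(starRingEnd ℂ) x)) = sq x)
    (hZrel : ∀ x ∈ Ω, (starRingEnd ℂ) (Zv (-(starRingEnd ℂ) x)) = -Z x)
    (hHrel : ∀ x ∈ Ω, (starRingEnd ℂ) (Hv (-(starRingEnd ℂ) x)) = (H x)⁻¹)
    -- base points
    (x₀ : ℂ) (hx₀ : x₀ ∈ Ω)
    -- the WKB series: `u⁺` pairs with `v⁻`, `u⁻` pairs with `v⁺`
    (we wo wem wom vwe vwo vwep vwop : ℂ → ℂ)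
    (hwP : IsWKBSum Ω h 1 sq H x₀ we wo)
    (hwM : IsWKBSum Ω h (-1) sq H x₀ wem wom)
    (hvM : IsWKBSum Ω h (-1) sqv Hv (-(starRingEnd ℂ) x₀) vwe vwo)
    (hvP : IsWKBSum Ω h 1 sqv Hv (-(starRingEnd ℂ) x₀) vwep vwop) :
    ∀ x ∈ Ω,
      -- `u⁺(x) = [[0,-1],[1,0]] conj (v⁻(-conj x))`
      ((wkbPlus h Z H we wo x).1
          = -(starRingEnd ℂ) ((wkbMinus h Zv Hv vwe vwo (-(starRingEnd ℂ) x)).2) ∧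
       (wkbPlus h Z H we wo x).2
          = (starRingEnd ℂ) ((wkbMinus h Zv Hv vwe vwo (-(starRingEnd ℂ) x)).1)) ∧
      -- `u⁻(x) = -[[0,-1],[1,0]] conj (v⁺(-conj x))`
      ((wkbMinus h Z H wem wom x).1
          = (starRingEnd ℂ) ((wkbPlus h Zv Hv vwep vwop (-(starRingEnd ℂ) x)).2) ∧
       (wkbMinus h Z H wem wom x).2
          = -(starRingEnd ℂ) ((wkbPlus h Zv Hv vwep vwop (-(starRingEnd ℂ) x)).1)) := by
  have hc (x : ℂ) (hx : x ∈ Ω) : logDeriv H x = conj (logDeriv Hv (-conj x)) :=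
    logDeriv_eq_conj_logDeriv_of_imReflect_eq_inv hΩopen hHrel hx (hH x hx).1
  have hgP := hvM.imReflect hΩsym hsqrel hc
  have hgM := hvP.imReflect hΩsym hsqrel hc
  rw [map_neg, map_one, neg_neg] at hgP
  rw [map_one] at hgM
  intro x hx
  obtain ⟨hvwe, hvwo⟩ := hwP.unique hΩopen hΩconn hx₀ hZ hgP hwM hx
  obtain ⟨hvwep, hvwop⟩ := hwM.unique hΩopen hΩconn hx₀ hZ hgM (by rwa [neg_neg]) hx
  exact ⟨wkbPlus_eq_rotate_conj_wkbMinus (hZrel x hx) (hHrel x hx) hvwe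
      (neg_eq_iff_eq_neg.1 hvwo),
    wkbMinus_eq_neg_rotate_conj_wkbPlus (hZrel x hx) (hHrel x hx) hvwep
      (neg_eq_iff_eq_neg.1 hvwop)⟩

/-- **Lemma 4.3, second case.** -/
theorem wkb_symmetry_second
    (F : ℂ → ℂ)  -- the perturbed potential `A_ε`
    (lam : ℂ) (h : ℝ) (hh : 0 < h)
    (Ω : Set ℂ) (hΩopen : IsOpen Ω) (hΩconn : IsPreconnected Ω)
    (hΩsym : ∀ x ∈ Ω, -(starRingEnd ℂ) x ∈ Ω)
    -- the symmetry `conj(A_ε(-conj x)) = -A_ε(x)`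
    (hFsym : ∀ x ∈ Ω, (starRingEnd ℂ) (F (-(starRingEnd ℂ) x)) = -F x)
    -- branches and phases for the spectral parameter `λ`
    (sq H Z : ℂ → ℂ)
    (hsq : ∀ x ∈ Ω, sq x ^ 2 = F x ^ 2 - lam ^ 2)
    (hH : ∀ x ∈ Ω, H x ≠ 0 ∧ (H x) ^ 4 = (F x + lam) / (F x - lam))
    (hZ : ∀ x ∈ Ω, HasDerivAt Z (sq x) x)
    -- branches and phases for the spectral parameter `conj λ`
    (sqv Hv Zv : ℂ → ℂ)
    (hsqv : ∀ x ∈ Ω, sqv x ^ 2 = F x ^ 2 - ((starRingEnd ℂ) lam) ^ 2)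
    (hHv : ∀ x ∈ Ω, Hv x ≠ 0 ∧ (Hv x) ^ 4 =
        (F x + (starRingEnd ℂ) lam) / (F x - (starRingEnd ℂ) lam))
    (hZv : ∀ x ∈ Ω, HasDerivAt Zv (sqv x) x)
    -- compatibility of the branches under the symmetry
    (hsqrel : ∀ x ∈ Ω, (starRingEnd ℂ) (sqv (-(starRingEnd ℂ) x)) = sq x)
    (hZrel : ∀ x ∈ Ω, (starRingEnd ℂ) (Zv (-(starRingEnd ℂ) x)) = -Z x)
    (hHrel : ∀ x ∈ Ω, (starRingEnd ℂ) (Hv (-(starRingEnd ℂ) x)) = (H x)⁻¹)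
    -- base points
    (γ x₀ : ℂ) (hγ : γ ∈ Ω) (hx₀ : x₀ ∈ Ω) (hZγ : Z γ = 0)
    (hZvγ : Zv (-(starRingEnd ℂ) γ) = 0)
    -- the WKB series: `u⁺` pairs with `v⁻`, `u⁻` pairs with `v⁺`
    (we wo wem wom vwe vwo vwep vwop : ℂ → ℂ)
    (hwP : IsWKBSum Ω h 1 sq H x₀ we wo)
    (hwM : IsWKBSum Ω h (-1) sq H x₀ wem wom)
    (hvM : IsWKBSum Ω h (-1) sqv Hv (-(starRingEnd ℂ) x₀) vwe vwo)
    (hvP : IsWKBSum Ω h 1 sqv Hv (-(starRingEnd ℂ) x₀) vwep vwop) :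
    ∀ x ∈ Ω,
      -- `u⁺(x) = [[0,-1],[1,0]] conj (v⁻(-conj x))`
      ((wkbPlus h Z H we wo x).1
          = -(starRingEnd ℂ) ((wkbMinus h Zv Hv vwe vwo (-(starRingEnd ℂ) x)).2) ∧
       (wkbPlus h Z H we wo x).2
          = (starRingEnd ℂ) ((wkbMinus h Zv Hv vwe vwo (-(starRingEnd ℂ) x)).1)) ∧
      -- `u⁻(x) = -[[0,-1],[1,0]] conj (v⁺(-conj x))`
      ((wkbMinus h Z H wem wom x).1
          = (starRingEnd ℂ) ((wkbPlus h Zv Hv vwep vwop (-(starRingEnd ℂ) x)).2) ∧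
       (wkbMinus h Z H wem wom x).2
          = -(starRingEnd ℂ) ((wkbPlus h Zv Hv vwep vwop (-(starRingEnd ℂ) x)).1)) :=
  wkb_symmetry_second_general F lam h Ω hΩopen hΩconn hΩsym sq H Z hH hZ sqv Hv Zv hsqrel hZrel
    hHrel x₀ hx₀ we wo wem wom vwe vwo vwep vwop hwP hwM hvM hvP

end
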